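/- arXiv:1703.06859 — 3 statements merged into one kernel-verified Lean document; each statement's English description precedes it below -/
import Mathlib

section
/- Let α, β, λ, C₂ > 0 be real constants and p a real number. Define ρ(r) = (α/(βλ))·(C₂·r^p − 1) and g(r) = λ·ρ(r) for r > 0. Then the function Φ(r) = r·ρ'(r) − r·ρ(r)·(β/(α + β·g(r)))·g'(r) is differentiable on (0,∞) and Φ'(r) = 0 for every r > 0; that is, ρ and g solve the steady-state radially symmetric density equation 0 = d/dr( r·ρ' − r·ρ·(β/(α+βg))·g' ). -/
/-- The steady-state density/chemical pair solves the steady-state radially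
symmetric density equation: the radial flux
`Φ(r) = r ρ'(r) - r ρ(r) (β/(α+β g(r))) g'(r)` is differentiable on `(0,∞)`
with derivative `0` there, i.e. `0 = dΦ/dr`. -/
theorem stmt1 (α β lam C₂ p : ℝ) (hα : 0 < α) (hβ : 0 < β) (hlam : 0 < lam)
    (hC₂ : 0 < C₂) (ρ g : ℝ → ℝ)
    (hρ : ∀ r : ℝ, ρ r = (α / (β * lam)) * (C₂ * r ^ p - 1))
    (hg : ∀ r : ℝ, g r = lam * ρ r) :
    ∀ r : ℝ, 0 < r →
      HasDerivAt
        (fun r : ℝ =>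
          r * deriv ρ r - r * ρ r * (β / (α + β * g r)) * deriv g r)
        0 r := by
  have hρ' : ρ = fun r : ℝ => (α / (β * lam)) * (C₂ * r ^ p - 1) := funext hρ
  have hg' : g = fun r : ℝ => lam * ρ r := funext hg
  intro r hr
  have key : ∀ x : ℝ, 0 < x →
      x * deriv ρ x - x * ρ x * (β / (α + β * g x)) * deriv g x
        = α / (β * lam) * p := by
    intro x hx
    have hx0 : x ≠ 0 := ne_of_gt hx
    have hdρ : HasDerivAt ρ (α / (β * lam) * (C₂ * (p * x ^ (p - 1)))) x := by
      rw [hρ']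
      exact (((Real.hasDerivAt_rpow_const (p := p) (Or.inl hx0)).const_mul
        C₂).sub_const 1).const_mul _
    have hdg : HasDerivAt g (lam * (α / (β * lam) * (C₂ * (p * x ^ (p - 1))))) x := by
      rw [hg']
      exact hdρ.const_mul lam
    rw [hdρ.deriv, hdg.deriv, hρ x, hg x, hρ x]
    have hsum : α + β * (lam * ((α / (β * lam)) * (C₂ * x ^ p - 1)))
        = α * (C₂ * x ^ p) := by
      field_simp
      ring
    rw [hsum]
    have hxx : x ^ (p - 1) = x ^ p / x := by
      rw [eq_div_iff hx0, ← Real.rpow_add_one hx0]; ring_nf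
    rw [hxx]
    field_simp
    ring
  have hconst : HasDerivAt (fun _ : ℝ => α / (β * lam) * p) 0 r :=
    hasDerivAt_const r _
  refine hconst.congr_of_eventuallyEq ?_
  filter_upwards [eventually_gt_nhds hr] with x hx using key x hx
end

section
/- Let α, β, λ, C₂, b > 0 be real constants and let p < 0. Define on (0,∞) the functions ρ(r) = (α/(βλ))·(C₂·r^p − 1), g(r) = λ·ρ(r), and v_θ(r) = √(−(b·α/β)·C₂·p)·r^{p/2}. Then the triple (ρ, g, v_θ) is a time-independent, radially symmetric solution of the full steady-state system: (i) the function r ↦ r·ρ'(r) − r·ρ(r)·(β/(α+β·g(r)))·g'(r) has derivative 0 at every r > 0; (ii) λ·ρ(r) − g(r) = 0 for every r > 0; and (iii) −v_θ(r)²/r = b·g'(r) for every r > 0. -/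
/-- The triple `(ρ, g, v_θ)` with `ρ(r) = (α/(βλ))(C₂ r^p - 1)`, `g = λρ`,
`v_θ(r) = √(-(bα/β)C₂p) r^{p/2}` is a time-independent, radially symmetric
solution of the full steady-state system:
(i) the radial flux `r ρ' - r ρ (β/(α+βg)) g'` has derivative `0` at each `r > 0`;
(ii) `λ ρ(r) - g(r) = 0`; (iii) `-v_θ(r)²/r = b g'(r)`. -/
theorem stmt3 (α β lam C₂ b p : ℝ) (hα : 0 < α) (hβ : 0 < β) (hlam : 0 < lam)
    (hC₂ : 0 < C₂) (hb : 0 < b) (hp : p < 0) (ρ g vθ : ℝ → ℝ)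
    (hρ : ∀ r : ℝ, ρ r = (α / (β * lam)) * (C₂ * r ^ p - 1))
    (hg : ∀ r : ℝ, g r = lam * ρ r)
    (hv : ∀ r : ℝ, vθ r = Real.sqrt (-(b * α / β) * C₂ * p) * r ^ (p / 2)) :
    ∀ r : ℝ, 0 < r →
      HasDerivAt
        (fun r : ℝ =>
          r * deriv ρ r - r * ρ r * (β / (α + β * g r)) * deriv g r) 0 r ∧
      lam * ρ r - g r = 0 ∧
      -(vθ r) ^ 2 / r = b * deriv g r := by
  have hρfun : ρ = fun x : ℝ => (α / (β * lam)) * (C₂ * x ^ p - 1) := funext hρ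
  have hgfun : g = fun x : ℝ => lam * ((α / (β * lam)) * (C₂ * x ^ p - 1)) := by
    funext x; rw [hg, hρ]
  have hdρ : ∀ x : ℝ, 0 < x →
      HasDerivAt ρ ((α / (β * lam)) * (C₂ * (p * x ^ (p - 1)))) x := by
    intro x hx
    rw [hρfun]
    exact (((Real.hasDerivAt_rpow_const (Or.inl hx.ne')).const_mul
      C₂).sub_const 1).const_mul _
  have hdg : ∀ x : ℝ, 0 < x →
      HasDerivAt g (lam * ((α / (β * lam)) * (C₂ * (p * x ^ (p - 1))))) x := by
    intro x hx
    rw [hgfun]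
    exact ((((Real.hasDerivAt_rpow_const (Or.inl hx.ne')).const_mul
      C₂).sub_const 1).const_mul _).const_mul lam
  intro r hr
  refine ⟨?_, by rw [hg]; ring, ?_⟩
  · -- the flux is constant on (0,∞)
    have hF : ∀ x : ℝ, 0 < x →
        x * deriv ρ x - x * ρ x * (β / (α + β * g x)) * deriv g x
          = (α / (β * lam)) * p := by
      intro x hx
      rw [(hdρ x hx).deriv, (hdg x hx).deriv, hρ, hg, hρ]
      have hxp : (0:ℝ) < x ^ p := Real.rpow_pos_of_pos hx p
      have h1 : x ^ (p - 1) = x ^ p / x := by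
        rw [Real.rpow_sub hx, Real.rpow_one]
      have hden : α + β * (lam * (α / (β * lam)) * (C₂ * x ^ p - 1))
          = α * (C₂ * x ^ p) := by
        field_simp
        ring
      rw [h1]
      have hden' : α + β * (lam * (α / (β * lam) * (C₂ * x ^ p - 1)))
          = α * (C₂ * x ^ p) := by
        field_simp
        ring
      rw [hden']
      field_simp
      ring
    have heq : (fun x : ℝ =>
        x * deriv ρ x - x * ρ x * (β / (α + β * g x)) * deriv g x)
        =ᶠ[nhds r] fun _ => (α / (β * lam)) * p := by
      filter_upwards [eventually_gt_nhds hr] with x hx using hF x hx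
    exact (hasDerivAt_const r ((α / (β * lam)) * p)).congr_of_eventuallyEq heq
  · -- velocity equation
    rw [hv, (hdg r hr).deriv]
    have hA : (0:ℝ) ≤ -(b * α / β) * C₂ * p := by
      have hp' : (0:ℝ) < -p := neg_pos.mpr hp
      have : 0 < b * α / β * C₂ * (-p) := by positivity
      nlinarith
    have hsq : Real.sqrt (-(b * α / β) * C₂ * p) ^ 2 = -(b * α / β) * C₂ * p :=
      Real.sq_sqrt hA
    have hhalf : (r ^ (p / 2)) ^ 2 = r ^ p := by
      rw [← Real.rpow_natCast (r ^ (p/2)) 2, ← Real.rpow_mul hr.le]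
      norm_num
    have h1 : r ^ (p - 1) = r ^ p / r := by
      rw [Real.rpow_sub hr, Real.rpow_one]
    rw [mul_pow, hsq, hhalf, h1]
    field_simp
end

section
/- Let α, β, λ, C₂, b > 0 be real constants and let p < 0. Define on ℝ² \ {0}: ρ(x) = (α/(βλ))·(C₂·‖x‖^p − 1), g(x) = λ·ρ(x), and V(x₁, x₂) = K·‖x‖^{p/2 − 1}·(−x₂, x₁) with K = √(−(b·α/β)·C₂·p). Then for every x ≠ 0: (i) the directional derivative of ρ at x in the direction V(x) equals 0, and the divergence at x of the flux field x ↦ ∇ρ(x) − ρ(x)·(β/(α + β·g(x)))·∇g(x) equals 0, so the steady density equation V·∇ρ = ∇·(∇ρ − ρ(β/(α+βg))∇g) holds; (ii) λ·ρ(x) − g(x) = 0; and (iii) the Fréchet derivative of V at x applied to V(x) equals b·∇g(x), i.e. (V·∇)V = b·∇g. -/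
/-!
All fields involved are powers of `‖x‖` times `x` or times the quarter turn `J x`. Since
`α + βg = αC₂‖x‖^p`, the flux collapses to `(αp/(βλ)) ‖x‖⁻² x`, and `y ↦ ‖y‖^q y` has divergence
`(n + q)‖y‖^q` in dimension `n`, which vanishes for `q = -2` in the plane. The swirl `V` is
orthogonal to the radial gradient of `ρ`, and its self-advection is the centripetal term
`-K²‖x‖^(p-2) x`; `K` is chosen precisely so that this equals `b∇g`.
-/

open InnerProductSpace

section RadialPower

variable {E : Type*} [NormedAddCommGroup E] [InnerProductSpace ℝ E]

theorem hasFDerivAt_norm_rpow_of_ne_zero {x : E} (hx : x ≠ 0) (q : ℝ) :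
    HasFDerivAt (fun y : E ↦ ‖y‖ ^ q) ((q * ‖x‖ ^ (q - 2)) • innerSL ℝ x) x := by
  convert (hasStrictFDerivAt_norm_sq x).hasFDerivAt.rpow_const (p := q / 2) (by simp [hx])
    using 1
  · ext y
    rw [← Real.rpow_natCast_mul (norm_nonneg y)]
    ring_nf
  · rw [← Real.rpow_natCast_mul (norm_nonneg x), two_smul, ← two_smul ℝ, smul_smul]
    ring_nf

theorem hasFDerivAt_mul_norm_rpow_add {x : E} (hx : x ≠ 0) (a b q : ℝ) :
    HasFDerivAt (fun y : E ↦ a * ‖y‖ ^ q + b) ((a * q * ‖x‖ ^ (q - 2)) • innerSL ℝ x) x := by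
  simpa only [smul_smul, mul_assoc] using
    ((hasFDerivAt_norm_rpow_of_ne_zero hx q).const_mul a).add_const b

theorem gradient_mul_norm_rpow_add [CompleteSpace E] {x : E} (hx : x ≠ 0) (a b q : ℝ) :
    gradient (fun y : E ↦ a * ‖y‖ ^ q + b) x = (a * q * ‖x‖ ^ (q - 2)) • x := by
  refine HasGradientAt.gradient ?_
  rw [hasGradientAt_iff_hasFDerivAt, map_smul]
  exact hasFDerivAt_mul_norm_rpow_add hx a b q

theorem trace_fderiv_mul_norm_rpow_smul_self [FiniteDimensional ℝ E] {x : E} (hx : x ≠ 0)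
    (c q : ℝ) :
    LinearMap.trace ℝ E (fderiv ℝ (fun y : E ↦ (c * ‖y‖ ^ q) • y) x).toLinearMap
      = c * (Module.finrank ℝ E + q) * ‖x‖ ^ q := by
  have h : HasFDerivAt (fun y : E ↦ (c * ‖y‖ ^ q) • y)
      ((c * ‖x‖ ^ q) • ContinuousLinearMap.id ℝ E
        + (c • (q * ‖x‖ ^ (q - 2)) • innerSL ℝ x).smulRight x) x :=
    ((hasFDerivAt_norm_rpow_of_ne_zero hx q).const_mul c).smul (hasFDerivAt_id x)
  have hq : ‖x‖ ^ (q - 2) * ‖x‖ ^ 2 = ‖x‖ ^ q := by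
    rw [← Real.rpow_natCast, ← Real.rpow_add (norm_pos_iff.2 hx)]
    norm_num
  rw [h.fderiv]
  simp only [ContinuousLinearMap.toLinearMap_add, ContinuousLinearMap.toLinearMap_smul,
    ContinuousLinearMap.coe_id, ContinuousLinearMap.coe_smulRight,
    ContinuousLinearMap.toLinearMap_innerSL_apply, map_add, map_smul, LinearMap.trace_id,
    smul_eq_mul, LinearMap.trace_smulRight, LinearMap.smul_apply, innerₛₗ_apply_apply,
    inner_self_eq_norm_sq_to_K, Real.ringHom_apply]
  linear_combination c * q * hq

theorem fderiv_mul_norm_rpow_smul_apply_self {J : E →L[ℝ] E} {x : E} (hx : x ≠ 0)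
    (hJJ : J (J x) = -x) (hJ : ⟪x, J x⟫_ℝ = 0) (k q : ℝ) :
    fderiv ℝ (fun y : E ↦ (k * ‖y‖ ^ q) • J y) x ((k * ‖x‖ ^ q) • J x)
      = -(k * ‖x‖ ^ q) ^ 2 • x := by
  have h : HasFDerivAt (fun y : E ↦ (k * ‖y‖ ^ q) • J y)
      ((k * ‖x‖ ^ q) • J + (k • (q * ‖x‖ ^ (q - 2)) • innerSL ℝ x).smulRight (J x)) x :=
    ((hasFDerivAt_norm_rpow_of_ne_zero hx q).const_mul k).smul J.hasFDerivAt
  rw [h.fderiv]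
  simp only [add_apply, smul_apply, map_smul, hJJ,
    ContinuousLinearMap.smulRight_apply, coe_innerSL_apply, hJ, smul_eq_mul, mul_zero, zero_smul,
    add_zero, smul_neg, smul_smul, neg_smul, sq]

end RadialPower

section Flux

variable {E : Type*} [NormedAddCommGroup E] [InnerProductSpace ℝ E] [CompleteSpace E]

noncomputable def chemotacticFlux (α β : ℝ) (ρ g : E → ℝ) (y : E) : E :=
  gradient ρ y - (ρ y * (β / (α + β * g y))) • gradient g y

theorem chemotacticFlux_eq_of_radial {α β lam A C p : ℝ} {ρ g : E → ℝ}
    (hρ : ρ = fun y ↦ A * C * ‖y‖ ^ p + -A)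
    (hg : g = fun y ↦ lam * A * C * ‖y‖ ^ p + -(lam * A))
    (hα : α ≠ 0) (hC : C ≠ 0) (hA : β * lam * A = α) {y : E} (hy : y ≠ 0) :
    chemotacticFlux α β ρ g y = (A * p * ‖y‖ ^ (-2 : ℝ)) • y := by
  have hsplit : ‖y‖ ^ (p - 2) = ‖y‖ ^ p * ‖y‖ ^ (-2 : ℝ) := by
    rw [← Real.rpow_add (norm_pos_iff.2 hy)]; ring_nf
  have hden : α + β * g y = α * C * ‖y‖ ^ p := by
    rw [hg, ← hA]; ring
  rw [chemotacticFlux, hden, hρ, hg, gradient_mul_norm_rpow_add hy, gradient_mul_norm_rpow_add hy,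
    smul_smul, ← sub_smul, hsplit]
  congr 1
  field_simp
  linear_combination (-A * p * (C * ‖y‖ ^ p - 1)) * hA

end Flux

noncomputable def rot90 : EuclideanSpace ℝ (Fin 2) →L[ℝ] EuclideanSpace ℝ (Fin 2) :=
  LinearMap.toContinuousLinearMap
    { toFun := fun x ↦ WithLp.toLp 2 ![-(x 1), x 0]
      map_add' := fun x y ↦ by
        ext i
        fin_cases i <;> simp [add_comm]
      map_smul' := fun c x ↦ by
        ext i
        fin_cases i <;> simp }

theorem rot90_apply (x : EuclideanSpace ℝ (Fin 2)) : rot90 x = WithLp.toLp 2 ![-(x 1), x 0] :=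
  rfl

theorem rot90_rot90 (x : EuclideanSpace ℝ (Fin 2)) : rot90 (rot90 x) = -x := by
  ext i
  fin_cases i <;> simp [rot90_apply]

theorem inner_rot90_self (x : EuclideanSpace ℝ (Fin 2)) : ⟪x, rot90 x⟫_ℝ = 0 := by
  simp [rot90_apply, PiLp.inner_apply, Fin.sum_univ_two]
  ring

/-- The rotationally symmetric "death spiral" configuration
`ρ(x) = (α/(βλ))(C₂‖x‖^p - 1)`, `g = λρ`,
`V(x) = K‖x‖^{p/2-1}·(-x₂, x₁)` with `K = √(-(bα/β)C₂p)` is a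
time-independent solution of the full two-dimensional diffusion-advection
system: for every `x ≠ 0`,
(i) `V·∇ρ = 0` and the divergence of the flux `∇ρ - ρ(β/(α+βg))∇g` vanishes,
so the steady density equation `V·∇ρ = ∇·(∇ρ - ρ(β/(α+βg))∇g)` holds;
(ii) `λρ(x) - g(x) = 0`; (iii) `(V·∇)V (x) = DV(x)[V(x)] = b∇g(x)`. -/
theorem stmt16 (α β lam C₂ b p : ℝ) (hα : 0 < α) (hβ : 0 < β) (hlam : 0 < lam)
    (hC₂ : 0 < C₂) (hb : 0 < b) (hp : p < 0)
    (ρ g : EuclideanSpace ℝ (Fin 2) → ℝ)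
    (V : EuclideanSpace ℝ (Fin 2) → EuclideanSpace ℝ (Fin 2))
    (hρ : ∀ x : EuclideanSpace ℝ (Fin 2),
      ρ x = (α / (β * lam)) * (C₂ * ‖x‖ ^ p - 1))
    (hg : ∀ x : EuclideanSpace ℝ (Fin 2), g x = lam * ρ x)
    (hV : ∀ x : EuclideanSpace ℝ (Fin 2),
      V x = (Real.sqrt (-(b * α / β) * C₂ * p) * ‖x‖ ^ (p / 2 - 1))
        • (WithLp.toLp 2 (![-(x 1), x 0] : Fin 2 → ℝ) : EuclideanSpace ℝ (Fin 2))) :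
    ∀ x : EuclideanSpace ℝ (Fin 2), x ≠ 0 →
      (fderiv ℝ ρ x (V x) = 0 ∧
        LinearMap.trace ℝ (EuclideanSpace ℝ (Fin 2))
          (fderiv ℝ (fun y : EuclideanSpace ℝ (Fin 2) =>
            gradient ρ y - (ρ y * (β / (α + β * g y))) • gradient g y)
              x).toLinearMap = 0) ∧
      lam * ρ x - g x = 0 ∧
      fderiv ℝ V x (V x) = b • gradient g x := by
  intro x hx
  set A := α / (β * lam) with hA
  set K := Real.sqrt (-(b * α / β) * C₂ * p)
  have hρ' : ρ = fun y ↦ A * C₂ * ‖y‖ ^ p + -A := funext fun y ↦ by rw [hρ]; ring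
  have hg' : g = fun y ↦ lam * A * C₂ * ‖y‖ ^ p + -(lam * A) :=
    funext fun y ↦ by rw [hg, hρ]; ring
  have hV' : V = fun y ↦ (K * ‖y‖ ^ (p / 2 - 1)) • rot90 y := funext hV
  refine ⟨⟨?_, ?_⟩, by rw [hg]; ring, ?_⟩
  · rw [hρ', (hasFDerivAt_mul_norm_rpow_add hx _ _ _).fderiv, hV', smul_apply,
      innerSL_apply_apply, real_inner_smul_right, inner_rot90_self]
    simp
  · change LinearMap.trace ℝ _ (fderiv ℝ (chemotacticFlux α β ρ g) x).toLinearMap = 0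
    have hβA : β * lam * A = α := by rw [hA]; field_simp
    have hflux : chemotacticFlux α β ρ g =ᶠ[nhds x] fun y ↦ (A * p * ‖y‖ ^ (-2 : ℝ)) • y :=
      (eventually_ne_nhds hx).mono fun y hy ↦
        chemotacticFlux_eq_of_radial hρ' hg' hα.ne' hC₂.ne' hβA hy
    rw [hflux.fderiv_eq, trace_fderiv_mul_norm_rpow_smul_self hx, finrank_euclideanSpace_fin]
    norm_num
  · have hK2 : K ^ 2 = -(b * α / β) * C₂ * p := by
      refine Real.sq_sqrt ?_
      have := mul_nonneg (by positivity : 0 ≤ b * α / β * C₂) (neg_nonneg.2 hp.le)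
      linarith
    have hsq : (‖x‖ ^ (p / 2 - 1)) ^ 2 = ‖x‖ ^ (p - 2) := by
      rw [← Real.rpow_natCast, ← Real.rpow_mul (norm_nonneg x)]; ring_nf
    rw [hV', fderiv_mul_norm_rpow_smul_apply_self hx (rot90_rot90 x) (inner_rot90_self x), hg',
      gradient_mul_norm_rpow_add hx, smul_smul, mul_pow, hK2, hsq, hA]
    congr 1
    field_simp
end
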